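/- Let f : ℝ → ℝ be a nonnegative integrable even function (a probability density of a symmetric distribution) satisfying: f(1) > 0, sup_{x ≥ 1} f(x) ≤ f(1) ≤ inf_{0 ≤ x ≤ 1} f(x), and there exist constants 0 < c₁ < c₂ < 1 and b > 0 with inf_{c₁ ≤ x ≤ c₂} f(x) ≥ (1 + b) f(1). Then ∫_{-∞}^{∞} (1 - x²)/(1 + x²)² · f(x) dx > 0. -/

import Mathlib

/-!
ψ(x) = (1 - x²)/(1 + x²)² is the derivative of x/(1 + x²), which vanishes at ±∞, so ∫ψ = 0
and ∫ψ f = ∫ψ (f - f(1)). By evenness and the two bounds on f, ψ and f - f(1) have the same sign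
everywhere, and on (c₁, c₂) both are strictly positive, so the last integral is positive.
-/

open MeasureTheory Set Filter Topology

noncomputable def psi (x : ℝ) : ℝ := (1 - x ^ 2) / (1 + x ^ 2) ^ 2

noncomputable def psiPrimitive (x : ℝ) : ℝ := x / (1 + x ^ 2)

lemma psi_abs (x : ℝ) : psi |x| = psi x := by
  simp only [psi, sq_abs]

lemma psi_nonneg {x : ℝ} (hx : x ^ 2 ≤ 1) : 0 ≤ psi x :=
  div_nonneg (by linarith) (by positivity)

lemma psi_pos {x : ℝ} (hx : x ^ 2 < 1) : 0 < psi x :=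
  div_pos (by linarith) (by positivity)

lemma psi_nonpos {x : ℝ} (hx : 1 ≤ x ^ 2) : psi x ≤ 0 :=
  div_nonpos_of_nonpos_of_nonneg (by linarith) (by positivity)

lemma continuous_psi : Continuous psi :=
  Continuous.div (by fun_prop) (by fun_prop) fun x => by positivity

lemma abs_psi_le_inv_one_add_sq (x : ℝ) : |psi x| ≤ (1 + x ^ 2)⁻¹ := by
  have hx : 0 < 1 + x ^ 2 := by positivity
  have hnum : |1 - x ^ 2| ≤ 1 + x ^ 2 := abs_le.2 ⟨by nlinarith, by nlinarith⟩
  rw [psi, abs_div, abs_of_pos (pow_pos hx 2), div_le_iff₀ (pow_pos hx 2)]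
  calc |1 - x ^ 2| ≤ 1 + x ^ 2 := hnum
    _ = (1 + x ^ 2)⁻¹ * (1 + x ^ 2) ^ 2 := by field_simp

lemma abs_psi_le_one (x : ℝ) : |psi x| ≤ 1 :=
  (abs_psi_le_inv_one_add_sq x).trans (inv_le_one_of_one_le₀ (by nlinarith))

lemma integrable_psi : Integrable psi :=
  integrable_inv_one_add_sq.mono' continuous_psi.aestronglyMeasurable
    (Eventually.of_forall abs_psi_le_inv_one_add_sq)

lemma hasDerivAt_psiPrimitive (x : ℝ) : HasDerivAt psiPrimitive (psi x) x := by
  have hx : 1 + x ^ 2 ≠ 0 := by positivity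
  have hden : HasDerivAt (fun y : ℝ => 1 + y ^ 2) (2 * x) x := by
    simpa using (hasDerivAt_pow 2 x).const_add 1
  refine ((hasDerivAt_id x).div hden hx).congr_deriv ?_
  rw [psi, id]
  field_simp
  ring

lemma psiPrimitive_inv (x : ℝ) : psiPrimitive x⁻¹ = psiPrimitive x := by
  rcases eq_or_ne x 0 with rfl | hx
  · simp
  · simp only [psiPrimitive]
    field_simp
    ring

lemma continuous_psiPrimitive : Continuous psiPrimitive :=
  Continuous.div (by fun_prop) (by fun_prop) fun x => by positivity

lemma tendsto_psiPrimitive_of_tendsto_inv {l : Filter ℝ}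
    (hl : Tendsto (fun x : ℝ => x⁻¹) l (𝓝 0)) : Tendsto psiPrimitive l (𝓝 0) := by
  have h := (continuous_psiPrimitive.tendsto 0).comp hl
  rwa [Function.comp_def, funext psiPrimitive_inv, psiPrimitive, zero_div] at h

lemma integral_psi : ∫ x, psi x = 0 := by
  rw [integral_of_hasDerivAt_of_tendsto hasDerivAt_psiPrimitive integrable_psi
    (tendsto_psiPrimitive_of_tendsto_inv tendsto_inv_atBot_zero)
    (tendsto_psiPrimitive_of_tendsto_inv tendsto_inv_atTop_zero), sub_self]

lemma integral_mul_sub_const_of_integral_eq_zero {α : Type*} [MeasurableSpace α]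
    {μ : Measure α} {φ f : α → ℝ} (hφ : Integrable φ μ) (hφf : Integrable (fun x => φ x * f x) μ)
    (hφ0 : ∫ x, φ x ∂μ = 0) (c : ℝ) :
    ∫ x, φ x * (f x - c) ∂μ = ∫ x, φ x * f x ∂μ := by
  simp_rw [mul_sub]
  rw [integral_sub hφf (hφ.mul_const c), integral_mul_const, hφ0, zero_mul, sub_zero]

lemma psi_mul_sub_nonneg {f : ℝ → ℝ} (hf_even : ∀ x, f (-x) = f x)
    (h_sup : ∀ x, 1 ≤ x → f x ≤ f 1) (h_inf : ∀ x, 0 ≤ x → x ≤ 1 → f 1 ≤ f x) (x : ℝ) :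
    0 ≤ psi x * (f x - f 1) := by
  have hf_abs : f |x| = f x := by
    rcases abs_choice x with h | h <;> rw [h]
    exact hf_even x
  rw [← psi_abs, ← hf_abs]
  rcases le_total |x| 1 with hx | hx
  · exact mul_nonneg (psi_nonneg (by nlinarith [abs_nonneg x]))
      (sub_nonneg.2 (h_inf _ (abs_nonneg x) hx))
  · exact mul_nonneg_of_nonpos_of_nonpos (psi_nonpos (by nlinarith))
      (sub_nonpos.2 (h_sup _ hx))

theorem psi_density_integral_pos_general
    (f : ℝ → ℝ) (hf_int : Integrable f)
    (hf_even : ∀ x, f (-x) = f x)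
    (hf1 : 0 < f 1)
    (h_sup : ∀ x, 1 ≤ x → f x ≤ f 1)
    (h_inf : ∀ x, 0 ≤ x → x ≤ 1 → f 1 ≤ f x)
    (c₁ c₂ b : ℝ) (hc₁ : 0 < c₁) (hc₁₂ : c₁ < c₂) (hc₂ : c₂ < 1) (hb : 0 < b)
    (h_bump : ∀ x, c₁ ≤ x → x ≤ c₂ → (1 + b) * f 1 ≤ f x) :
    0 < ∫ x : ℝ, (1 - x ^ 2) / (1 + x ^ 2) ^ 2 * f x := by
  have hψf : Integrable (fun x => psi x * f x) :=
    hf_int.bdd_mul continuous_psi.aestronglyMeasurable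
      (Eventually.of_forall abs_psi_le_one)
  have hψg : Integrable (fun x => psi x * (f x - f 1)) := by
    simpa only [mul_sub, Pi.sub_def] using hψf.sub (integrable_psi.mul_const (f 1))
  change 0 < ∫ x, psi x * f x
  rw [← integral_mul_sub_const_of_integral_eq_zero integrable_psi hψf integral_psi (f 1),
    integral_pos_iff_support_of_nonneg (psi_mul_sub_nonneg hf_even h_sup h_inf) hψg]
  have hbump_support : Ioo c₁ c₂ ⊆ Function.support fun x => psi x * (f x - f 1) := by
    intro x ⟨hx₁, hx₂⟩
    refine (mul_pos (psi_pos (by nlinarith)) ?_).ne'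
    nlinarith [h_bump x hx₁.le hx₂.le]
  calc (0 : ENNReal) < volume (Ioo c₁ c₂) := by simpa using hc₁₂
    _ ≤ _ := measure_mono hbump_support

theorem psi_density_integral_pos
    (f : ℝ → ℝ) (hf_nonneg : ∀ x, 0 ≤ f x) (hf_int : Integrable f)
    (hf_even : ∀ x, f (-x) = f x)
    (hf1 : 0 < f 1)
    (h_sup : ∀ x, 1 ≤ x → f x ≤ f 1)
    (h_inf : ∀ x, 0 ≤ x → x ≤ 1 → f 1 ≤ f x)
    (c₁ c₂ b : ℝ) (hc₁ : 0 < c₁) (hc₁₂ : c₁ < c₂) (hc₂ : c₂ < 1) (hb : 0 < b)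
    (h_bump : ∀ x, c₁ ≤ x → x ≤ c₂ → (1 + b) * f 1 ≤ f x) :
    0 < ∫ x : ℝ, (1 - x ^ 2) / (1 + x ^ 2) ^ 2 * f x :=
  psi_density_integral_pos_general f hf_int hf_even hf1 h_sup h_inf c₁ c₂ b hc₁ hc₁₂ hc₂ hb h_bump
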